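/- In the standing setup, assume that τ₁^l : V → W* is injective and that R is the Nichols algebra of V. Then: (1) R₀ = k, i.e. the space {r ∈ R : S(1)r = 0} of elements of the Verma module R annihilated by S(1) equals k·1; (2) for every left ℬ-module M, the ℬ-linear map κ_M : R⊗M₀ → M, κ_M(r⊗m) = rm, is injective. -/

import Mathlib

open TensorProduct BigOperators

noncomputable section

namespace QB

variable (k : Type) [Field k]

/-- Data of a Hopf algebra structure (with bijective antipode, whose inverse is the
pode) on a `k`-algebra `H`. -/
structure HopfData (H : Type) [Ring H] [Algebra k H] where
  comul : H →ₗ[k] H ⊗[k] H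
  counit : H →ₗ[k] k
  antipode : H →ₗ[k] H
  pode : H →ₗ[k] H
  comul_one : comul 1 = 1 ⊗ₜ[k] 1
  comul_mul : ∀ a b : H, comul (a * b) = comul a * comul b
  counit_one : counit 1 = 1
  counit_mul : ∀ a b : H, counit (a * b) = counit a * counit b
  coassoc : ∀ a : H,
    (TensorProduct.assoc k H H H) ((comul.rTensor H) (comul a)) = (comul.lTensor H) (comul a)
  counit_comul : ∀ a : H, (TensorProduct.lid k H) ((counit.rTensor H) (comul a)) = a
  comul_counit : ∀ a : H, (TensorProduct.rid k H) ((counit.lTensor H) (comul a)) = a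
  antipode_conv : ∀ a : H, (LinearMap.mul' k H) ((antipode.rTensor H) (comul a)) = counit a • 1
  conv_antipode : ∀ a : H, (LinearMap.mul' k H) ((antipode.lTensor H) (comul a)) = counit a • 1
  pode_antipode : ∀ a : H, pode (antipode a) = a
  antipode_pode : ∀ a : H, antipode (pode a) = a

/-- A (left-left) Yetter-Drinfeld module over the Hopf algebra `(H, D)`. -/
structure YDMod (H : Type) [Ring H] [Algebra k H] (D : HopfData k H)
    (V : Type) [AddCommGroup V] [Module k V] where
  act : H →ₗ[k] V →ₗ[k] V
  act_one : ∀ v, act 1 v = v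
  act_mul : ∀ (a b : H) (v : V), act (a * b) v = act a (act b v)
  coact : V →ₗ[k] H ⊗[k] V
  coact_counit : ∀ v, (TensorProduct.lid k V) ((D.counit.rTensor V) (coact v)) = v
  coact_coassoc : ∀ v,
    (TensorProduct.assoc k H H V) ((D.comul.rTensor V) (coact v)) = (coact.lTensor H) (coact v)
  yd_compat : ∀ (a : H) (v : V) (p q : ℕ) (a1 a2 a3 : Fin p → H)
      (vJ : Fin q → H) (vV : Fin q → V),
    (D.comul.rTensor H) (D.comul a) = ∑ i, (a1 i ⊗ₜ[k] a2 i) ⊗ₜ[k] a3 i →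
    coact v = ∑ j, vJ j ⊗ₜ[k] vV j →
    coact (act a v) = ∑ i, ∑ j, (a1 i * vJ j * D.antipode (a3 i)) ⊗ₜ[k] act (a2 i) (vV j)

end QB

namespace QB

variable (k : Type) [Field k]

/-- A braided graded Hopf algebra `R` (given as an ordinary `k`-algebra together with a
braided coproduct) in the category of Yetter-Drinfeld modules over `(J, D)`, with
`R(0) = k`, together with its antipode. -/
structure BGH (J : Type) [Ring J] [Algebra k J] (D : HopfData k J)
    (R : Type) [Ring R] [Algebra k R] extends YDMod k J D R where
  grade : ℕ → Submodule k R
  internal : DirectSum.IsInternal grade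
  one_grade : (1 : R) ∈ grade 0
  mul_grade : ∀ {m n : ℕ} {r s : R}, r ∈ grade m → s ∈ grade n → r * s ∈ grade (m + n)
  grade0 : grade 0 = Submodule.span k {(1 : R)}
  comul : R →ₗ[k] R ⊗[k] R
  counit : R →ₗ[k] k
  comul_one : comul 1 = 1 ⊗ₜ[k] 1
  counit_one : counit 1 = 1
  counit_mul : ∀ r s : R, counit (r * s) = counit r * counit s
  coassoc : ∀ r : R,
    (TensorProduct.assoc k R R R) ((comul.rTensor R) (comul r)) = (comul.lTensor R) (comul r)
  counit_comul : ∀ r : R, (TensorProduct.lid k R) ((counit.rTensor R) (comul r)) = r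
  comul_counit : ∀ r : R, (TensorProduct.rid k R) ((counit.lTensor R) (comul r)) = r
  /-- braided multiplicativity of the coproduct -/
  comul_mul : ∀ (r s : R) (p q u : ℕ) (r1 r2 : Fin p → R) (rJ : Fin p → Fin q → J)
      (rV : Fin p → Fin q → R) (s1 s2 : Fin u → R),
    comul r = ∑ i, r1 i ⊗ₜ[k] r2 i →
    (∀ i, coact (r2 i) = ∑ j, rJ i j ⊗ₜ[k] rV i j) →
    comul s = ∑ t, s1 t ⊗ₜ[k] s2 t →
    comul (r * s) = ∑ i, ∑ j, ∑ t, (r1 i * act (rJ i j) (s1 t)) ⊗ₜ[k] (rV i j * s2 t)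
  /-- `R` is a `J`-module algebra -/
  act_mul_alg : ∀ (a : J) (r s : R) (p : ℕ) (a1 a2 : Fin p → J),
    D.comul a = ∑ i, a1 i ⊗ₜ[k] a2 i →
    act a (r * s) = ∑ i, act (a1 i) r * act (a2 i) s
  act_one_alg : ∀ a : J, act a (1 : R) = D.counit a • (1 : R)
  /-- `R` is a `J`-comodule algebra -/
  coact_mul : ∀ (r s : R) (p q : ℕ) (rJ : Fin p → J) (rV : Fin p → R)
      (sJ : Fin q → J) (sV : Fin q → R),
    coact r = ∑ i, rJ i ⊗ₜ[k] rV i → coact s = ∑ j, sJ j ⊗ₜ[k] sV j →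
    coact (r * s) = ∑ i, ∑ j, (rJ i * sJ j) ⊗ₜ[k] (rV i * sV j)
  coact_one : coact 1 = 1 ⊗ₜ[k] 1
  /-- the coproduct is `J`-linear -/
  comul_act : ∀ (a : J) (r : R) (p q : ℕ) (a1 a2 : Fin p → J) (r1 r2 : Fin q → R),
    D.comul a = ∑ i, a1 i ⊗ₜ[k] a2 i → comul r = ∑ j, r1 j ⊗ₜ[k] r2 j →
    comul (act a r) = ∑ i, ∑ j, act (a1 i) (r1 j) ⊗ₜ[k] act (a2 i) (r2 j)
  counit_act : ∀ (a : J) (r : R), counit (act a r) = D.counit a * counit r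
  /-- the coproduct is `J`-colinear -/
  comul_coact : ∀ (r : R) (p q u : ℕ) (r1 r2 : Fin p → R)
      (aJ : Fin p → Fin q → J) (aV : Fin p → Fin q → R)
      (bJ : Fin p → Fin u → J) (bV : Fin p → Fin u → R)
      (w : ℕ) (rJ : Fin w → J) (rV : Fin w → R),
    comul r = ∑ i, r1 i ⊗ₜ[k] r2 i →
    (∀ i, coact (r1 i) = ∑ j, aJ i j ⊗ₜ[k] aV i j) →
    (∀ i, coact (r2 i) = ∑ t, bJ i t ⊗ₜ[k] bV i t) →
    coact r = ∑ j, rJ j ⊗ₜ[k] rV j →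
    ∑ i, ∑ j, ∑ t, (aJ i j * bJ i t) ⊗ₜ[k] (aV i j ⊗ₜ[k] bV i t)
      = ∑ j, rJ j ⊗ₜ[k] comul (rV j)
  /-- the counit is `J`-colinear -/
  counit_coact : ∀ (r : R) (w : ℕ) (rJ : Fin w → J) (rV : Fin w → R),
    coact r = ∑ j, rJ j ⊗ₜ[k] rV j → ∑ j, counit (rV j) • rJ j = counit r • (1 : J)
  /-- the action preserves the grading -/
  act_grade : ∀ (a : J) {n : ℕ} {r : R}, r ∈ grade n → act a r ∈ grade n
  /-- the coaction preserves the grading -/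
  coact_grade : ∀ {n : ℕ} (r : R), r ∈ grade n → ∃ (p : ℕ) (rJ : Fin p → J) (rV : Fin p → R),
    (∀ i, rV i ∈ grade n) ∧ coact r = ∑ i, rJ i ⊗ₜ[k] rV i
  /-- the coproduct preserves the grading -/
  comul_grade : ∀ {n : ℕ} (r : R), r ∈ grade n → ∃ (p : ℕ) (d e : Fin p → ℕ) (x y : Fin p → R),
    (∀ i, d i + e i = n ∧ x i ∈ grade (d i) ∧ y i ∈ grade (e i)) ∧
      comul r = ∑ i, x i ⊗ₜ[k] y i
  /-- the (braided) antipode of `R` -/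
  antipodeR : R →ₗ[k] R
  antipodeR_conv : ∀ (r : R) (p : ℕ) (r1 r2 : Fin p → R), comul r = ∑ i, r1 i ⊗ₜ[k] r2 i →
    ∑ i, antipodeR (r1 i) * r2 i = counit r • 1
  conv_antipodeR : ∀ (r : R) (p : ℕ) (r1 r2 : Fin p → R), comul r = ∑ i, r1 i ⊗ₜ[k] r2 i →
    ∑ i, r1 i * antipodeR (r2 i) = counit r • 1

variable {J : Type} [Ring J] [Algebra k J] {R : Type} [Ring R] [Algebra k R]

/-- `R` is a pre-Nichols algebra of `V = R(1)` iff it is generated by its degree-one part. -/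
def BGH.IsPreNichols {D : HopfData k J} (B : BGH k J D R) : Prop :=
  Algebra.adjoin k (B.grade 1 : Set R) = ⊤

/-- The set of primitive elements of the braided Hopf algebra `R`. -/
def BGH.primitives {D : HopfData k J} (B : BGH k J D R) : Set R :=
  {r : R | B.comul r = r ⊗ₜ[k] 1 + 1 ⊗ₜ[k] r}

/-- `R` is the Nichols algebra of `V = R(1)` iff it is pre-Nichols and its degree-one
part coincides with the space of primitives. -/
def BGH.IsNichols {D : HopfData k J} (B : BGH k J D R) : Prop :=
  B.IsPreNichols k ∧ (B.grade 1 : Set R) = B.primitives k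

end QB

namespace QB

variable (k : Type) [Field k]
variable {J : Type} [Ring J] [Algebra k J] {R : Type} [Ring R] [Algebra k R]

/-- The bosonization `𝒜 = R ⋊ J` : the (uniquely determined) ordinary Hopf algebra
structure on the vector space `R ⊗ J`, given as data subject to the defining formulas
for the product and coproduct, together with its antipode and pode. -/
structure Boson (D : HopfData k J) (B : BGH k J D R) where
  Amul : (R ⊗[k] J) →ₗ[k] (R ⊗[k] J) →ₗ[k] (R ⊗[k] J)
  Amul_assoc : ∀ x y z, Amul (Amul x y) z = Amul x (Amul y z)
  Amul_one : ∀ x, Amul x ((1 : R) ⊗ₜ[k] (1 : J)) = x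
  one_Amul : ∀ x, Amul ((1 : R) ⊗ₜ[k] (1 : J)) x = x
  Amul_def : ∀ (r s : R) (a b : J) (p : ℕ) (a1 a2 : Fin p → J),
    D.comul a = ∑ i, a1 i ⊗ₜ[k] a2 i →
    Amul (r ⊗ₜ[k] a) (s ⊗ₜ[k] b) = ∑ i, (r * B.act (a1 i) s) ⊗ₜ[k] (a2 i * b)
  Acomul : (R ⊗[k] J) →ₗ[k] (R ⊗[k] J) ⊗[k] (R ⊗[k] J)
  Acomul_def : ∀ (r : R) (a : J) (p q u : ℕ) (r1 r2 : Fin p → R)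
      (rJ : Fin p → Fin q → J) (rV : Fin p → Fin q → R) (aa1 aa2 : Fin u → J),
    B.comul r = ∑ i, r1 i ⊗ₜ[k] r2 i →
    (∀ i, B.coact (r2 i) = ∑ j, rJ i j ⊗ₜ[k] rV i j) →
    D.comul a = ∑ t, aa1 t ⊗ₜ[k] aa2 t →
    Acomul (r ⊗ₜ[k] a)
      = ∑ i, ∑ j, ∑ t, (r1 i ⊗ₜ[k] (rJ i j * aa1 t)) ⊗ₜ[k] (rV i j ⊗ₜ[k] aa2 t)
  Acounit : (R ⊗[k] J) →ₗ[k] k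
  Acounit_def : ∀ (r : R) (a : J), Acounit (r ⊗ₜ[k] a) = B.counit r * D.counit a
  Acoassoc : ∀ x, (TensorProduct.assoc k (R ⊗[k] J) (R ⊗[k] J) (R ⊗[k] J))
      ((Acomul.rTensor (R ⊗[k] J)) (Acomul x)) = (Acomul.lTensor (R ⊗[k] J)) (Acomul x)
  Acounit_comul : ∀ x, (TensorProduct.lid k (R ⊗[k] J)) ((Acounit.rTensor (R ⊗[k] J)) (Acomul x)) = x
  Acomul_counit : ∀ x, (TensorProduct.rid k (R ⊗[k] J)) ((Acounit.lTensor (R ⊗[k] J)) (Acomul x)) = x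
  Santipode : (R ⊗[k] J) →ₗ[k] (R ⊗[k] J)
  Spode : (R ⊗[k] J) →ₗ[k] (R ⊗[k] J)
  antipode_conv : ∀ (x : R ⊗[k] J) (p : ℕ) (x1 x2 : Fin p → R ⊗[k] J),
    Acomul x = ∑ i, x1 i ⊗ₜ[k] x2 i →
    ∑ i, Amul (Santipode (x1 i)) (x2 i) = Acounit x • ((1 : R) ⊗ₜ[k] (1 : J))
  conv_antipode : ∀ (x : R ⊗[k] J) (p : ℕ) (x1 x2 : Fin p → R ⊗[k] J),
    Acomul x = ∑ i, x1 i ⊗ₜ[k] x2 i →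
    ∑ i, Amul (x1 i) (Santipode (x2 i)) = Acounit x • ((1 : R) ⊗ₜ[k] (1 : J))
  pode_antipode : ∀ x, Spode (Santipode x) = x
  antipode_pode : ∀ x, Santipode (Spode x) = x

variable {K S : Type} [Ring K] [Algebra k K] [Ring S] [Algebra k S]

/-- the embedding `R → R ⊗ J`, `r ↦ r ⊗ 1` -/
def incl₁ : R →ₗ[k] R ⊗[k] J := (TensorProduct.mk k R J).flip 1

/-- the embedding `J → R ⊗ J`, `a ↦ 1 ⊗ a` -/
def incl₂ : J →ₗ[k] R ⊗[k] J := TensorProduct.mk k R J 1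

/-- the projection `π : 𝒜 → J` induced by `ε ⊗ id` -/
def proj₂ (B : BGH k J D R) : (R ⊗[k] J) →ₗ[k] J :=
  (TensorProduct.lid k J).toLinearMap ∘ₗ (B.counit.rTensor J)

end QB

namespace QB

variable (k : Type) [Field k]
variable {J : Type} [Ring J] [Algebra k J] {R : Type} [Ring R] [Algebra k R]
variable {K S : Type} [Ring K] [Algebra k K] [Ring S] [Algebra k S]

/-- The standing setup of the paper: Hopf algebras `J`, `K` with bijective antipode,
pre-Nichols algebras `R`, `S` of `V = R(1)`, `W = S(1)` in the Yetter-Drinfeld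
categories over `J`, `K`, their bosonizations `𝒜 = R ⋊ J`, `ℋ = S ⋊ K`, a skew pairing
`τ₀ : J ⊗ K → k` and the (unique) skew pairing `τ : 𝒜 ⊗ ℋ → k` extending `τ₀` with
`τ(J, W) = 0 = τ(V, K)`. -/
structure Setup (J K R S : Type) [Ring J] [Algebra k J] [Ring K] [Algebra k K]
    [Ring R] [Algebra k R] [Ring S] [Algebra k S] where
  DJ : HopfData k J
  DK : HopfData k K
  RB : BGH k J DJ R
  SB : BGH k K DK S
  RB_pre : RB.IsPreNichols k
  SB_pre : SB.IsPreNichols k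
  A : Boson k DJ RB
  H : Boson k DK SB
  τ₀ : J →ₗ[k] K →ₗ[k] k
  τ₀_mul_left : ∀ (a b : J) (x : K) (p : ℕ) (x1 x2 : Fin p → K),
    DK.comul x = ∑ i, x1 i ⊗ₜ[k] x2 i →
    τ₀ (a * b) x = ∑ i, τ₀ a (x1 i) * τ₀ b (x2 i)
  τ₀_mul_right : ∀ (a : J) (x y : K) (p : ℕ) (a1 a2 : Fin p → J),
    DJ.comul a = ∑ i, a1 i ⊗ₜ[k] a2 i →
    τ₀ a (x * y) = ∑ i, τ₀ (a1 i) y * τ₀ (a2 i) x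
  τ₀_one_left : ∀ x : K, τ₀ 1 x = DK.counit x
  τ₀_one_right : ∀ a : J, τ₀ a 1 = DJ.counit a
  τ : (R ⊗[k] J) →ₗ[k] (S ⊗[k] K) →ₗ[k] k
  τ_mul_left : ∀ (x y : R ⊗[k] J) (z : S ⊗[k] K) (p : ℕ) (z1 z2 : Fin p → S ⊗[k] K),
    H.Acomul z = ∑ i, z1 i ⊗ₜ[k] z2 i →
    τ (A.Amul x y) z = ∑ i, τ x (z1 i) * τ y (z2 i)
  τ_mul_right : ∀ (x : R ⊗[k] J) (y z : S ⊗[k] K) (p : ℕ) (x1 x2 : Fin p → R ⊗[k] J),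
    A.Acomul x = ∑ i, x1 i ⊗ₜ[k] x2 i →
    τ x (H.Amul y z) = ∑ i, τ (x1 i) z * τ (x2 i) y
  τ_one_left : ∀ z : S ⊗[k] K, τ ((1 : R) ⊗ₜ[k] (1 : J)) z = H.Acounit z
  τ_one_right : ∀ x : R ⊗[k] J, τ x ((1 : S) ⊗ₜ[k] (1 : K)) = A.Acounit x
  τ_ext : ∀ (a : J) (x : K), τ ((1 : R) ⊗ₜ[k] a) ((1 : S) ⊗ₜ[k] x) = τ₀ a x
  τ_JW : ∀ (a : J) (w : S), w ∈ SB.grade 1 → τ ((1 : R) ⊗ₜ[k] a) (w ⊗ₜ[k] (1 : K)) = 0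
  τ_VK : ∀ (v : R) (x : K), v ∈ RB.grade 1 → τ (v ⊗ₜ[k] (1 : J)) ((1 : S) ⊗ₜ[k] x) = 0

variable {k}

/-- The restriction `τ_{RS} : R ⊗ S → k` of `τ`, as a bilinear form. -/
def Setup.tauRS (St : Setup k J K R S) : R →ₗ[k] S →ₗ[k] k :=
  LinearMap.compl₂ (St.τ ∘ₗ incl₁ k) (incl₁ k)

/-- The action `s ▷ r = τ(r₍₁₎, s) r₍₂₎` of `S` on `R` (formula (3.4)). -/
def Setup.sAct (St : Setup k J K R S) (s : S) : R →ₗ[k] R :=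
  (TensorProduct.lid k R).toLinearMap ∘ₗ
    (LinearMap.rTensor R (St.tauRS.flip s)) ∘ₗ St.RB.comul

/-- The generalized `q`-boson algebra `ℬ`: the (uniquely determined) deformed algebra
structure on `R ⊗ S`, given as data subject to the defining relations (3.2), (3.3). -/
structure QBosonAlg (St : Setup k J K R S) where
  Bmul : (R ⊗[k] S) →ₗ[k] (R ⊗[k] S) →ₗ[k] (R ⊗[k] S)
  Bmul_assoc : ∀ x y z, Bmul (Bmul x y) z = Bmul x (Bmul y z)
  Bmul_one : ∀ x, Bmul x ((1 : R) ⊗ₜ[k] (1 : S)) = x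
  one_Bmul : ∀ x, Bmul ((1 : R) ⊗ₜ[k] (1 : S)) x = x
  mul_rr : ∀ r r' : R, Bmul (r ⊗ₜ[k] (1 : S)) (r' ⊗ₜ[k] (1 : S)) = (r * r') ⊗ₜ[k] (1 : S)
  mul_ss : ∀ s s' : S, Bmul ((1 : R) ⊗ₜ[k] s) ((1 : R) ⊗ₜ[k] s') = (1 : R) ⊗ₜ[k] (s * s')
  mul_rs : ∀ (r : R) (s : S), Bmul (r ⊗ₜ[k] (1 : S)) ((1 : R) ⊗ₜ[k] s) = r ⊗ₜ[k] s
  mul_wv : ∀ (v : R) (w : S), v ∈ St.RB.grade 1 → w ∈ St.SB.grade 1 →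
    ∀ (p q : ℕ) (vJ : Fin p → J) (vV : Fin p → R) (wK : Fin q → K) (wW : Fin q → S),
    St.RB.coact v = ∑ i, vJ i ⊗ₜ[k] vV i →
    St.SB.coact w = ∑ j, wK j ⊗ₜ[k] wW j →
    Bmul ((1 : R) ⊗ₜ[k] w) (v ⊗ₜ[k] (1 : S))
      = (∑ i, ∑ j, St.τ₀ (vJ i) (wK j) • (vV i ⊗ₜ[k] wW j))
        + St.τ (v ⊗ₜ[k] (1 : J)) (w ⊗ₜ[k] (1 : K)) • ((1 : R) ⊗ₜ[k] (1 : S))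

/-- Non-degeneracy of a bilinear form. -/
def Nondeg {M N : Type} [AddCommGroup M] [Module k M] [AddCommGroup N] [Module k N]
    (φ : M →ₗ[k] N →ₗ[k] k) : Prop :=
  (∀ m : M, (∀ n : N, φ m n = 0) → m = 0) ∧ (∀ n : N, (∀ m : M, φ m n = 0) → n = 0)

end QB

/-!
Write `Δ_{a,b}` for the bihomogeneous components of the coproduct of `R`. Since
`τ(R(m), W) = 0` for `m ≠ 1`, the action `w ▷ r = τ(r₍₁₎, w) r₍₂₎` only sees `Δ_{1,n} r`; so if
`S(1)` kills `r ∈ R(n+1)`, the nondegeneracy of `τ₁` on `V` gives `Δ_{1,n} r = 0`. In a Nichols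
algebra `Δ_{1,n}` is injective on `R(n+1)`: by coassociativity a counterexample of minimal degree
would be primitive of degree at least two. Hence `R₀ = k`.

For `m ∈ M₀` the defining relations of `ℬ` give `w (r m) = (w ▷ r) m`, so `κ_M` intertwines
`(w ▷ -) ⊗ id` with the action of `w`. If `κ_M ξ = 0`, induction on the top degree of the left
legs of `ξ` shows that every `(w ▷ -) ⊗ id` kills `ξ`; then the left legs lie in `R₀ = k`, on
which `κ_M` is visibly injective.
-/

namespace QB

variable {k : Type} [Field k]

section TensorCoordinates

variable {M N P P' : Type} [AddCommGroup M] [Module k M] [AddCommGroup N] [Module k N]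
  [AddCommGroup P] [Module k P] [AddCommGroup P'] [Module k P']

theorem exists_fin_sum_tmul (ξ : M ⊗[k] N) :
    ∃ (p : ℕ) (x : Fin p → M) (y : Fin p → N), ξ = ∑ i, x i ⊗ₜ[k] y i := by
  induction ξ using TensorProduct.induction_on with
  | zero => exact ⟨0, ![], ![], by simp⟩
  | tmul m n => exact ⟨1, ![m], ![n], by simp⟩
  | add a b ha hb =>
    obtain ⟨p, x, y, rfl⟩ := ha
    obtain ⟨q, x', y', rfl⟩ := hb
    exact ⟨p + q, Fin.append x x', Fin.append y y', by simp [Fin.sum_univ_add]⟩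

theorem equivFinsuppOfBasisRight_rTensor {ι : Type} [DecidableEq ι] (b : Module.Basis ι k N)
    (f : M →ₗ[k] P) (ξ : M ⊗[k] N) (j : ι) :
    equivFinsuppOfBasisRight b (f.rTensor N ξ) j = f (equivFinsuppOfBasisRight b ξ j) := by
  induction ξ using TensorProduct.induction_on with
  | zero => simp
  | tmul m n => simp
  | add a c ha hc => simp [ha, hc]

/-- Over a field `N` is free, so this is checked coordinatewise in a basis of `N`. -/
theorem rTensor_eq_zero_of_iInf_ker_le {ι : Type} (f : ι → M →ₗ[k] P) (g : M →ₗ[k] P')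
    (hfg : ⨅ i, LinearMap.ker (f i) ≤ LinearMap.ker g) (ξ : M ⊗[k] N)
    (hξ : ∀ i, (f i).rTensor N ξ = 0) : g.rTensor N ξ = 0 := by
  classical
  let b := Module.Basis.ofVectorSpace k N
  refine (equivFinsuppOfBasisRight (M := P') b).injective (Finsupp.ext fun j => ?_)
  rw [equivFinsuppOfBasisRight_rTensor, map_zero, Finsupp.coe_zero, Pi.zero_apply]
  refine hfg (Submodule.mem_iInf _ |>.mpr fun i => ?_)
  rw [LinearMap.mem_ker, ← equivFinsuppOfBasisRight_rTensor, hξ i, map_zero, Finsupp.coe_zero,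
    Pi.zero_apply]

end TensorCoordinates

section GradedProj

variable {ι M : Type} [DecidableEq ι] [AddCommGroup M] [Module k M] {A : ι → Submodule k M}

def gradedProj (h : DirectSum.IsInternal A) (n : ι) : M →ₗ[k] M :=
  (A n).subtype ∘ₗ DirectSum.component k ι (fun i => A i) n ∘ₗ
    (LinearEquiv.ofBijective (DirectSum.coeLinearMap A) h).symm.toLinearMap

theorem gradedProj_mem (h : DirectSum.IsInternal A) (n : ι) (x : M) : gradedProj h n x ∈ A n :=
  Subtype.coe_prop _

theorem gradedProj_of_mem (h : DirectSum.IsInternal A) {m : ι} (n : ι) {x : M} (hx : x ∈ A m) :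
    gradedProj h n x = if m = n then x else 0 := by
  change ((LinearEquiv.ofBijective (DirectSum.coeLinearMap A) h).symm x n : M) = _
  split_ifs with hmn
  · subst hmn
    rw [h.ofBijective_coeLinearMap_of_mem hx]
  · rw [h.ofBijective_coeLinearMap_of_mem_ne hmn hx, Submodule.coe_zero]

theorem gradedProj_eq_self (h : DirectSum.IsInternal A) {n : ι} {x : M} (hx : x ∈ A n) :
    gradedProj h n x = x := by
  rw [gradedProj_of_mem h n hx, if_pos rfl]

theorem gradedProj_eq_zero (h : DirectSum.IsInternal A) {m n : ι} (hmn : m ≠ n) {x : M}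
    (hx : x ∈ A m) : gradedProj h n x = 0 := by
  rw [gradedProj_of_mem h n hx, if_neg hmn]

theorem gradedProj_gradedProj (h : DirectSum.IsInternal A) (n : ι) (x : M) :
    gradedProj h n (gradedProj h n x) = gradedProj h n x :=
  gradedProj_eq_self h (gradedProj_mem h n x)

theorem eq_zero_of_mem_of_mem (h : DirectSum.IsInternal A) {m n : ι} (hmn : m ≠ n) {x : M}
    (hm : x ∈ A m) (hn : x ∈ A n) : x = 0 := by
  rw [← gradedProj_eq_self h hn, gradedProj_eq_zero h hmn hm]

theorem eq_zero_of_forall_gradedProj_eq_zero (h : DirectSum.IsInternal A) {x : M}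
    (hx : ∀ n, gradedProj h n x = 0) : x = 0 := by
  have hd : (LinearEquiv.ofBijective (DirectSum.coeLinearMap A) h).symm x = 0 :=
    DFinsupp.ext fun n => Subtype.ext (hx n)
  simpa using hd

theorem mem_of_forall_ne_gradedProj_eq_zero (h : DirectSum.IsInternal A) {m : ι} {x : M}
    (hx : ∀ n, n ≠ m → gradedProj h n x = 0) : x ∈ A m := by
  have hxm : x - gradedProj h m x = 0 := by
    refine eq_zero_of_forall_gradedProj_eq_zero h fun n => ?_
    by_cases hn : n = m
    · rw [hn, map_sub, gradedProj_gradedProj, sub_self]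
    · rw [map_sub, hx n hn, gradedProj_eq_zero h (Ne.symm hn) (gradedProj_mem h m x), sub_zero]
  rw [sub_eq_zero.mp hxm]
  exact gradedProj_mem h m x

theorem linearMap_ext_of_isInternal (h : DirectSum.IsInternal A) {P : Type} [AddCommGroup P]
    [Module k P] {f g : M →ₗ[k] P} (hfg : ∀ n, ∀ x ∈ A n, f x = g x) : f = g := by
  ext x
  have hx : x ∈ ⨆ n, A n := h.submodule_iSup_eq_top ▸ Submodule.mem_top
  refine Submodule.iSup_induction A (motive := fun x => f x = g x) hx hfg (by simp) ?_
  intro x y hx hy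
  rw [map_add, map_add, hx, hy]

end GradedProj

section GradedProjNat

variable {M N : Type} [AddCommGroup M] [Module k M] [AddCommGroup N] [Module k N]
  {A : ℕ → Submodule k M}

theorem exists_gradedProj_eq_zero_of_lt (h : DirectSum.IsInternal A) (x : M) :
    ∃ n₀, ∀ n, n₀ < n → gradedProj h n x = 0 := by
  classical
  let d := (LinearEquiv.ofBijective (DirectSum.coeLinearMap A) h).symm x
  refine ⟨d.support.sup id, fun n hn => ?_⟩
  have hnd : n ∉ d.support := fun hmem => (Finset.le_sup (f := id) hmem).not_gt hn
  change (d n : M) = 0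
  rw [DFinsupp.notMem_support_iff.mp hnd, Submodule.coe_zero]

theorem exists_rTensor_gradedProj_eq_zero_of_lt (h : DirectSum.IsInternal A) (ξ : M ⊗[k] N) :
    ∃ n₀, ∀ n, n₀ < n → (gradedProj h n).rTensor N ξ = 0 := by
  induction ξ using TensorProduct.induction_on with
  | zero => exact ⟨0, fun n _ => map_zero _⟩
  | tmul x y =>
    obtain ⟨n₀, hn₀⟩ := exists_gradedProj_eq_zero_of_lt h x
    exact ⟨n₀, fun n hn => by rw [LinearMap.rTensor_tmul, hn₀ n hn, zero_tmul]⟩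
  | add ξ η hξ hη =>
    obtain ⟨n₁, h₁⟩ := hξ
    obtain ⟨n₂, h₂⟩ := hη
    exact ⟨max n₁ n₂, fun n hn => by
      rw [map_add, h₁ n (by omega), h₂ n (by omega), add_zero]⟩

end GradedProjNat

section HopfAlgebras

variable {J R : Type} [Ring J] [Algebra k J] [Ring R] [Algebra k R]

theorem HopfData.sum_counit_smul_right (D : HopfData k J) (a : J) {p : ℕ} {a1 a2 : Fin p → J}
    (h : D.comul a = ∑ i, a1 i ⊗ₜ[k] a2 i) : ∑ i, D.counit (a2 i) • a1 i = a := by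
  simpa [h] using D.comul_counit a

namespace BGH

variable {D : HopfData k J} (B : BGH k J D R)

theorem sum_counit_smul_left (r : R) {p : ℕ} {r1 r2 : Fin p → R}
    (h : B.comul r = ∑ i, r1 i ⊗ₜ[k] r2 i) : ∑ i, B.counit (r1 i) • r2 i = r := by
  simpa [h] using B.counit_comul r

theorem exists_eq_smul_one_of_mem_grade_zero {x : R} (hx : x ∈ B.grade 0) :
    ∃ c : k, c • (1 : R) = x := by
  rwa [B.grade0, Submodule.mem_span_singleton] at hx

theorem eq_counit_smul_one_of_mem_grade_zero {x : R} (hx : x ∈ B.grade 0) :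
    x = B.counit x • 1 := by
  obtain ⟨c, rfl⟩ := B.exists_eq_smul_one_of_mem_grade_zero hx
  rw [map_smul, B.counit_one, smul_eq_mul, mul_one]

theorem mem_ker_id_sub_counit {x : R} (hx : x ∈ B.grade 0) :
    x ∈ LinearMap.ker (LinearMap.id - Algebra.linearMap k R ∘ₗ B.counit) := by
  rw [LinearMap.mem_ker, LinearMap.sub_apply, LinearMap.id_apply, LinearMap.comp_apply,
    Algebra.linearMap_apply, Algebra.algebraMap_eq_smul_one, sub_eq_zero]
  exact B.eq_counit_smul_one_of_mem_grade_zero hx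

/-- `R(0) = k` forces `Δ w = 1 ⊗ u + u' ⊗ 1` with `u, u' ∈ R(1)`, and the counit axioms then
give `u = u' = w`. -/
theorem comul_of_mem_grade_one {w : R} (hw : w ∈ B.grade 1) :
    B.comul w = w ⊗ₜ[k] 1 + 1 ⊗ₜ[k] w := by
  obtain ⟨p, d, e, x, y, hg, hc⟩ := B.comul_grade w hw
  obtain ⟨u, hu, u', hu', hΔ⟩ : ∃ u ∈ B.grade 1, ∃ u' ∈ B.grade 1,
      B.comul w = 1 ⊗ₜ[k] u + u' ⊗ₜ[k] 1 := by
    rw [hc]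
    refine Finset.sum_induction _
      (fun ξ => ∃ u ∈ B.grade 1, ∃ u' ∈ B.grade 1, ξ = 1 ⊗ₜ[k] u + u' ⊗ₜ[k] 1) ?_ ?_ ?_
    · rintro _ _ ⟨u₁, hu₁, u₁', hu₁', rfl⟩ ⟨u₂, hu₂, u₂', hu₂', rfl⟩
      exact ⟨u₁ + u₂, add_mem hu₁ hu₂, u₁' + u₂', add_mem hu₁' hu₂', by
        rw [tmul_add, add_tmul]; abel⟩
    · exact ⟨0, zero_mem _, 0, zero_mem _, by simp⟩
    · intro i _
      obtain ⟨hde, hx, hy⟩ := hg i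
      rcases Nat.eq_zero_or_pos (d i) with hd | hd
      · obtain ⟨c, hc⟩ := B.exists_eq_smul_one_of_mem_grade_zero (hd ▸ hx)
        refine ⟨c • y i, Submodule.smul_mem _ _ ((show e i = 1 by omega) ▸ hy), 0, zero_mem _, ?_⟩
        rw [← hc, smul_tmul, zero_tmul, add_zero]
      · obtain ⟨c, hc⟩ := B.exists_eq_smul_one_of_mem_grade_zero ((show e i = 0 by omega) ▸ hy)
        refine ⟨0, zero_mem _, c • x i, Submodule.smul_mem _ _ ((show d i = 1 by omega) ▸ hx), ?_⟩
        rw [← hc, tmul_smul, smul_tmul', tmul_zero, zero_add]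
  have hl : u + B.counit u' • 1 = w := by
    simpa [hΔ, B.counit_one] using B.counit_comul w
  have hr : B.counit u • 1 + u' = w := by
    simpa [hΔ, B.counit_one] using B.comul_counit w
  have hdeg : ∀ {z : R} {c : k}, z ∈ B.grade 1 → z + c • 1 = w → z = w := fun {z c} hz hzw =>
    (sub_eq_zero.mp (eq_zero_of_mem_of_mem B.internal (by norm_num : (0 : ℕ) ≠ 1)
      (by rw [← hzw, add_sub_cancel_left]; exact Submodule.smul_mem _ _ B.one_grade)
      (sub_mem hw hz))).symm
  rw [hΔ, hdeg hu hl, hdeg hu' (by rw [add_comm]; exact hr), add_comm]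

theorem counit_of_mem_grade_one {w : R} (hw : w ∈ B.grade 1) : B.counit w = 0 := by
  have h := B.counit_comul w
  rw [B.comul_of_mem_grade_one hw] at h
  have h' : B.counit w • (1 : R) = 0 := by simpa [B.counit_one] using h
  simpa [B.counit_one] using congrArg B.counit h'

theorem comul_mul_of_mem_grade_one {v : R} (hv : v ∈ B.grade 1) {p : ℕ} {vJ : Fin p → J}
    {vV : Fin p → R} (hcv : B.coact v = ∑ i, vJ i ⊗ₜ[k] vV i) {y : R} {u : ℕ} {y1 y2 : Fin u → R}
    (hy : B.comul y = ∑ t, y1 t ⊗ₜ[k] y2 t) :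
    B.comul (v * y) = ∑ t, (v * y1 t) ⊗ₜ[k] y2 t
      + ∑ i, ∑ t, B.act (vJ i) (y1 t) ⊗ₜ[k] (vV i * y2 t) := by
  have h1 : B.comul v = ∑ i : Fin 2, (![v, 1] : Fin 2 → R) i ⊗ₜ[k] (![1, v] : Fin 2 → R) i := by
    simp [B.comul_of_mem_grade_one hv]
  have h2 : ∀ i : Fin 2, B.coact ((![1, v] : Fin 2 → R) i)
      = ∑ j : Fin (p + 1),
          (![Fin.cases 1 (fun _ => 0), Fin.cases 0 vJ] : Fin 2 → Fin (p + 1) → J) i j ⊗ₜ[k]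
          (![Fin.cases 1 (fun _ => 0), Fin.cases 0 vV] : Fin 2 → Fin (p + 1) → R) i j := by
    intro i
    fin_cases i
    · simpa [Fin.sum_univ_succ] using B.coact_one
    · simpa [Fin.sum_univ_succ] using hcv
  rw [B.comul_mul v y 2 (p + 1) u _ _ _ _ y1 y2 h1 h2 hy]
  simp [Fin.sum_univ_succ, B.act_one]

theorem pow_grade_one_le (n : ℕ) : B.grade 1 ^ n ≤ B.grade n := by
  induction n with
  | zero => rw [pow_zero, Submodule.one_eq_span, ← B.grade0]
  | succ n ih =>
    rw [pow_succ', Submodule.mul_le]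
    intro v hv y hy
    simpa [add_comm] using B.mul_grade hv (ih hy)

theorem mem_iSup_pow_grade_one (hpre : B.IsPreNichols k) (x : R) :
    x ∈ ⨆ n, B.grade 1 ^ n := by
  have hx : x ∈ Algebra.adjoin k (B.grade 1 : Set R) := hpre ▸ Algebra.mem_top
  induction hx using Algebra.adjoin_induction with
  | mem x hx => exact Submodule.mem_iSup_of_mem 1 (by simpa using hx)
  | algebraMap c => exact Submodule.mem_iSup_of_mem 0 (by simp [Submodule.algebraMap_mem c])
  | add x y _ _ hx hy => exact add_mem hx hy
  | mul x y _ _ hx hy =>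
    refine Submodule.iSup_induction _ (motive := fun x => x * y ∈ ⨆ n, B.grade 1 ^ n) hx
      (fun a x hxa => ?_) (by simp) (fun x x' h h' => by rw [add_mul]; exact add_mem h h')
    refine Submodule.iSup_induction _ (motive := fun y => x * y ∈ ⨆ n, B.grade 1 ^ n) hy
      (fun b y hyb => ?_) (by simp) (fun y y' h h' => by rw [mul_add]; exact add_mem h h')
    exact Submodule.mem_iSup_of_mem (a + b)
      (pow_add (B.grade 1) a b ▸ Submodule.mul_mem_mul hxa hyb)

theorem grade_eq_pow (hpre : B.IsPreNichols k) (n : ℕ) : B.grade n = B.grade 1 ^ n := by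
  refine le_antisymm (fun x hx => ?_) (B.pow_grade_one_le n)
  rw [← gradedProj_eq_self B.internal hx]
  refine Submodule.iSup_induction _ (motive := fun x => gradedProj B.internal n x ∈ B.grade 1 ^ n)
    (B.mem_iSup_pow_grade_one hpre x) (fun m y hy => ?_) (by simp)
    (fun y z hy hz => by rw [map_add]; exact add_mem hy hz)
  rw [gradedProj_of_mem B.internal n (B.pow_grade_one_le m hy)]
  split_ifs with hmn
  · exact hmn ▸ hy
  · exact zero_mem _

theorem counit_eq_zero_of_mem_grade (hpre : B.IsPreNichols k) {n : ℕ} (hn : n ≠ 0) {x : R}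
    (hx : x ∈ B.grade n) : B.counit x = 0 := by
  obtain ⟨m, rfl⟩ := Nat.exists_eq_succ_of_ne_zero hn
  rw [B.grade_eq_pow hpre, pow_succ'] at hx
  refine Submodule.mul_induction_on hx (fun v hv y _ => ?_) (fun x y hx hy => by
    rw [map_add, hx, hy, add_zero])
  rw [B.counit_mul, B.counit_of_mem_grade_one hv, zero_mul]

abbrev proj (n : ℕ) : R →ₗ[k] R := gradedProj B.internal n

theorem proj_zero (hpre : B.IsPreNichols k) (x : R) : B.proj 0 x = B.counit x • 1 := by
  suffices h : B.proj 0 = B.counit.smulRight 1 from LinearMap.congr_fun h x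
  refine linearMap_ext_of_isInternal B.internal fun n y hy => ?_
  rw [LinearMap.smulRight_apply]
  rcases eq_or_ne n 0 with rfl | hn
  · rw [gradedProj_eq_self B.internal hy, ← B.eq_counit_smul_one_of_mem_grade_zero hy]
  · rw [gradedProj_eq_zero B.internal hn hy, B.counit_eq_zero_of_mem_grade hpre hn hy, zero_smul]

/-- The component `Δ_{a,b} = (π_a ⊗ π_b) ∘ Δ` of the coproduct of bidegree `(a, b)`. -/
def comulBideg (a b : ℕ) : R →ₗ[k] R ⊗[k] R :=
  TensorProduct.map (B.proj a) (B.proj b) ∘ₗ B.comul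

theorem comulBideg_of_mem_grade {a b m : ℕ} (hab : a + b ≠ m) {x : R} (hx : x ∈ B.grade m) :
    B.comulBideg a b x = 0 := by
  obtain ⟨p, d, e, y, z, hg, hc⟩ := B.comul_grade x hx
  rw [comulBideg, LinearMap.comp_apply, hc, map_sum]
  refine Finset.sum_eq_zero fun i _ => ?_
  obtain ⟨hde, hy, hz⟩ := hg i
  rw [map_tmul]
  by_cases hda : d i = a
  · rw [gradedProj_eq_zero B.internal (show e i ≠ b by omega) hz, tmul_zero]
  · rw [gradedProj_eq_zero B.internal hda hy, zero_tmul]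

theorem comulBideg_comp_proj {a b n : ℕ} (h : a + b = n) :
    B.comulBideg a b ∘ₗ B.proj n = B.comulBideg a b := by
  refine linearMap_ext_of_isInternal B.internal fun m x hx => ?_
  rw [LinearMap.comp_apply, gradedProj_of_mem B.internal _ hx]
  split_ifs with hmn
  · rfl
  · rw [map_zero, B.comulBideg_of_mem_grade (by omega) hx]

theorem comul_eq_sum_comulBideg {n : ℕ} {x : R} (hx : x ∈ B.grade n) :
    B.comul x = ∑ a ∈ Finset.range (n + 1), B.comulBideg a (n - a) x := by
  obtain ⟨p, d, e, y, z, hg, hc⟩ := B.comul_grade x hx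
  simp only [comulBideg, LinearMap.comp_apply, hc, map_sum]
  rw [Finset.sum_comm]
  refine Finset.sum_congr rfl fun i _ => ?_
  obtain ⟨hde, hy, hz⟩ := hg i
  rw [Finset.sum_eq_single (d i)]
  · rw [map_tmul, gradedProj_eq_self B.internal hy, show n - d i = e i by omega,
      gradedProj_eq_self B.internal hz]
  · intro a _ hne
    rw [map_tmul, gradedProj_eq_zero B.internal (Ne.symm hne) hy, zero_tmul]
  · intro hd
    exact absurd (Finset.mem_range.mpr (by omega)) hd

theorem comulBideg_zero_left (hpre : B.IsPreNichols k) {n : ℕ} {x : R} (hx : x ∈ B.grade n) :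
    B.comulBideg 0 n x = 1 ⊗ₜ[k] x := by
  have hmap : TensorProduct.map (B.proj 0) (B.proj n) = TensorProduct.mk k R R 1 ∘ₗ B.proj n ∘ₗ
      (TensorProduct.lid k R).toLinearMap ∘ₗ B.counit.rTensor R := by
    refine TensorProduct.ext' fun y z => ?_
    simp [B.proj_zero hpre, smul_tmul]
  rw [comulBideg, LinearMap.comp_apply, hmap]
  simp only [LinearMap.comp_apply, LinearEquiv.coe_coe, B.counit_comul,
    gradedProj_eq_self B.internal hx, TensorProduct.mk_apply]

theorem comulBideg_zero_right (hpre : B.IsPreNichols k) {n : ℕ} {x : R} (hx : x ∈ B.grade n) :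
    B.comulBideg n 0 x = x ⊗ₜ[k] 1 := by
  have hmap : TensorProduct.map (B.proj n) (B.proj 0) = (TensorProduct.mk k R R).flip 1 ∘ₗ
      B.proj n ∘ₗ (TensorProduct.rid k R).toLinearMap ∘ₗ B.counit.lTensor R := by
    refine TensorProduct.ext' fun y z => ?_
    simp [B.proj_zero hpre]
  rw [comulBideg, LinearMap.comp_apply, hmap]
  simp only [LinearMap.comp_apply, LinearEquiv.coe_coe, B.comul_counit,
    gradedProj_eq_self B.internal hx, LinearMap.flip_apply, TensorProduct.mk_apply]

theorem comulBideg_coassoc (a b c : ℕ) (x : R) :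
    TensorProduct.assoc k R R R (TensorProduct.map (B.comulBideg a b) (B.proj c) (B.comul x))
      = TensorProduct.map (B.proj a) (B.comulBideg b c) (B.comul x) := by
  have hl : TensorProduct.map (B.comulBideg a b) (B.proj c)
      = TensorProduct.map (TensorProduct.map (B.proj a) (B.proj b)) (B.proj c) ∘ₗ
        B.comul.rTensor R := by
    rw [comulBideg, LinearMap.rTensor, ← TensorProduct.map_comp, LinearMap.comp_id]
  have hr : TensorProduct.map (B.proj a) (B.comulBideg b c)
      = TensorProduct.map (B.proj a) (TensorProduct.map (B.proj b) (B.proj c)) ∘ₗ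
        B.comul.lTensor R := by
    rw [comulBideg, LinearMap.lTensor, ← TensorProduct.map_comp, LinearMap.comp_id]
  rw [hl, hr, LinearMap.comp_apply, LinearMap.comp_apply, ← B.coassoc]
  exact (LinearMap.congr_fun (TensorProduct.map_map_comp_assoc_eq _ _ _) _).symm

/-- Coassociativity moves `Δ_{1,a}` across `Δ`, where it meets `Δ_{1,a+b} x = 0`. -/
theorem comulBideg_succ_eq_zero {a b : ℕ}
    (ha : ∀ y ∈ B.grade (a + 1), B.comulBideg 1 a y = 0 → y = 0) {x : R}
    (hx : B.comulBideg 1 (a + b) x = 0) : B.comulBideg (a + 1) b x = 0 := by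
  have hcoassoc : (B.comulBideg 1 a).rTensor R ((B.proj b).lTensor R (B.comul x)) = 0 := by
    rw [← LinearMap.comp_apply, LinearMap.rTensor_comp_lTensor,
      ← (TensorProduct.assoc k R R R).map_eq_zero_iff, comulBideg_coassoc,
      ← B.comulBideg_comp_proj (rfl : a + b = a + b), ← LinearMap.lTensor_comp_map,
      LinearMap.comp_apply]
    change (B.comulBideg a b).lTensor R (B.comulBideg 1 (a + b) x) = 0
    rw [hx, map_zero]
  have hker : ⨅ _ : Unit, LinearMap.ker (B.comulBideg 1 a) ≤ LinearMap.ker (B.proj (a + 1)) := by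
    intro y hy
    simp only [iInf_const, LinearMap.mem_ker] at hy ⊢
    refine ha _ (gradedProj_mem B.internal _ y) ?_
    rw [← LinearMap.comp_apply, B.comulBideg_comp_proj (add_comm 1 a), hy]
  have := rTensor_eq_zero_of_iInf_ker_le _ _ hker _ fun _ => hcoassoc
  rwa [← LinearMap.comp_apply, LinearMap.rTensor_comp_lTensor] at this

/-- By strong induction the middle components of `Δ x` vanish (`comulBideg_succ_eq_zero`), so
`x` is primitive, hence of degree one. -/
theorem eq_zero_of_comulBideg_one_eq_zero (hN : B.IsNichols k) {n : ℕ} {x : R}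
    (hx : x ∈ B.grade (n + 1)) (h : B.comulBideg 1 n x = 0) : x = 0 := by
  induction n using Nat.strong_induction_on generalizing x with
  | _ n IH =>
  rcases n with _ | n
  · rw [zero_add] at hx
    rw [B.comulBideg_zero_right hN.1 hx] at h
    simpa [B.counit_one] using congrArg (fun ξ => TensorProduct.rid k R (B.counit.lTensor R ξ)) h
  have hmid : ∀ a ∈ Finset.range (n + 3), a ≠ 0 ∧ a ≠ n + 2 →
      B.comulBideg a (n + 2 - a) x = 0 := by
    rintro (_ | _ | c) hc ⟨h0, hc'⟩
    · exact absurd rfl h0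
    · exact h
    · simp only [Finset.mem_range] at hc
      have h' : B.comulBideg 1 (c + 1 + (n - c)) x = 0 := by
        rwa [show c + 1 + (n - c) = n + 1 by omega]
      rw [show n + 2 - (c + 1 + 1) = n - c by omega]
      exact B.comulBideg_succ_eq_zero (fun y hy => IH (c + 1) (by omega) hy) h'
  have hprim : B.comul x = x ⊗ₜ[k] 1 + 1 ⊗ₜ[k] x := by
    rw [B.comul_eq_sum_comulBideg hx, Finset.sum_eq_add_of_mem (n + 2) 0 (by simp) (by simp)
      (by omega) fun a ha h => hmid a ha h.symm, Nat.sub_self, Nat.sub_zero,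
      B.comulBideg_zero_right hN.1 hx, B.comulBideg_zero_left hN.1 hx]
  have hV : x ∈ (B.grade 1 : Set R) := hN.2 ▸ hprim
  exact eq_zero_of_mem_of_mem B.internal (by omega) hx hV

end BGH

end HopfAlgebras

variable {J K R S : Type} [Ring J] [Algebra k J] [Ring K] [Algebra k K]
  [Ring R] [Algebra k R] [Ring S] [Algebra k S]

namespace Setup

variable (St : Setup k J K R S)

theorem tauRS_apply (r : R) (s : S) :
    St.tauRS r s = St.τ (r ⊗ₜ[k] (1 : J)) (s ⊗ₜ[k] (1 : K)) := rfl

theorem Amul_tmul_one_tmul_one (r s : R) :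
    St.A.Amul (r ⊗ₜ[k] (1 : J)) (s ⊗ₜ[k] (1 : J)) = (r * s) ⊗ₜ[k] (1 : J) := by
  simpa [St.RB.act_one] using St.A.Amul_def r s 1 1 1 ![1] ![1] (by simp [St.DJ.comul_one])

theorem Amul_tmul_one_one_tmul (r : R) (b : J) :
    St.A.Amul (r ⊗ₜ[k] (1 : J)) ((1 : R) ⊗ₜ[k] b) = r ⊗ₜ[k] b := by
  simpa [St.RB.act_one] using St.A.Amul_def r 1 1 b 1 ![1] ![1] (by simp [St.DJ.comul_one])

theorem Amul_one_tmul_tmul_one (a : J) (x : R) {p : ℕ} {a1 a2 : Fin p → J}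
    (h : St.DJ.comul a = ∑ i, a1 i ⊗ₜ[k] a2 i) :
    St.A.Amul ((1 : R) ⊗ₜ[k] a) (x ⊗ₜ[k] (1 : J)) = ∑ i, St.RB.act (a1 i) x ⊗ₜ[k] a2 i := by
  simpa using St.A.Amul_def 1 x a 1 p a1 a2 h

/-- `Δ(w) = w ⊗ 1 + w₍₋₁₎ ⊗ w₍₀₎` in `ℋ = S ⋊ K`, indexed by `Fin (q + 1)` as the pairing
axioms require. -/
theorem Acomul_tmul_one {w : S} (hw : w ∈ St.SB.grade 1) {q : ℕ} {wK : Fin q → K}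
    {wW : Fin q → S} (hcw : St.SB.coact w = ∑ j, wK j ⊗ₜ[k] wW j) :
    St.H.Acomul (w ⊗ₜ[k] (1 : K))
      = ∑ t : Fin (q + 1),
          Fin.cases (w ⊗ₜ[k] (1 : K)) (fun j => (1 : S) ⊗ₜ[k] wK j) t ⊗ₜ[k]
          Fin.cases ((1 : S) ⊗ₜ[k] (1 : K)) (fun j => wW j ⊗ₜ[k] (1 : K)) t := by
  have h1 : St.SB.comul w = ∑ i : Fin 2, (![w, 1] : Fin 2 → S) i ⊗ₜ[k] (![1, w] : Fin 2 → S) i := by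
    simp [St.SB.comul_of_mem_grade_one hw]
  have h2 : ∀ i : Fin 2, St.SB.coact ((![1, w] : Fin 2 → S) i)
      = ∑ j : Fin (q + 1),
          (![Fin.cases 1 (fun _ => 0), Fin.cases 0 wK] : Fin 2 → Fin (q + 1) → K) i j ⊗ₜ[k]
          (![Fin.cases 1 (fun _ => 0), Fin.cases 0 wW] : Fin 2 → Fin (q + 1) → S) i j := by
    intro i
    fin_cases i
    · simpa [Fin.sum_univ_succ] using St.SB.coact_one
    · simpa [Fin.sum_univ_succ] using hcw
  have h3 : St.DK.comul 1 = ∑ _t : Fin 1, (1 : K) ⊗ₜ[k] (1 : K) := by simp [St.DK.comul_one]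
  rw [St.H.Acomul_def w 1 2 (q + 1) 1 _ _ _ _ _ _ h1 h2 h3]
  simp [Fin.sum_univ_succ]

theorem tau_Amul_tmul_one {w : S} (hw : w ∈ St.SB.grade 1) {q : ℕ} {wK : Fin q → K}
    {wW : Fin q → S} (hcw : St.SB.coact w = ∑ j, wK j ⊗ₜ[k] wW j) (x y : R ⊗[k] J) :
    St.τ (St.A.Amul x y) (w ⊗ₜ[k] (1 : K))
      = St.τ x (w ⊗ₜ[k] (1 : K)) * St.τ y ((1 : S) ⊗ₜ[k] (1 : K))
        + ∑ j, St.τ x ((1 : S) ⊗ₜ[k] wK j) * St.τ y (wW j ⊗ₜ[k] (1 : K)) := by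
  rw [St.τ_mul_left x y _ (q + 1) _ _ (St.Acomul_tmul_one hw hcw), Fin.sum_univ_succ]
  simp

theorem tau_one_tmul_one {w : S} (hw : w ∈ St.SB.grade 1) :
    St.τ ((1 : R) ⊗ₜ[k] (1 : J)) (w ⊗ₜ[k] (1 : K)) = 0 := by
  rw [St.τ_one_left, St.H.Acounit_def, St.SB.counit_of_mem_grade_one hw, zero_mul]

theorem tau_tmul {w : S} (hw : w ∈ St.SB.grade 1) {q : ℕ} {wK : Fin q → K}
    {wW : Fin q → S} (hcw : St.SB.coact w = ∑ j, wK j ⊗ₜ[k] wW j)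
    (hwW : ∀ j, wW j ∈ St.SB.grade 1) (r : R) (b : J) :
    St.τ (r ⊗ₜ[k] b) (w ⊗ₜ[k] (1 : K)) = St.DJ.counit b * St.tauRS r w := by
  rw [← St.Amul_tmul_one_one_tmul r b, St.tau_Amul_tmul_one hw hcw, St.τ_ext,
    St.τ₀_one_right, tauRS_apply]
  simp [St.τ_JW _ _ (hwW _), mul_comm]

theorem tauRS_mul_of_mem_grade_one {w : S} (hw : w ∈ St.SB.grade 1) {q : ℕ} {wK : Fin q → K}
    {wW : Fin q → S} (hcw : St.SB.coact w = ∑ j, wK j ⊗ₜ[k] wW j) {v : R}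
    (hv : v ∈ St.RB.grade 1) (y : R) :
    St.tauRS (v * y) w = St.tauRS v w * St.RB.counit y := by
  rw [tauRS_apply, ← St.Amul_tmul_one_tmul_one, St.tau_Amul_tmul_one hw hcw, St.τ_one_right,
    St.A.Acounit_def, St.DJ.counit_one, mul_one]
  simp [St.τ_VK v _ hv, tauRS_apply]

/-- Read off from `(1 ⊗ a)(x ⊗ 1) = a₍₁₎ ⊳ x ⊗ a₍₂₎` in `R ⋊ J`. -/
theorem tauRS_act {w : S} (hw : w ∈ St.SB.grade 1) {q : ℕ} {wK : Fin q → K}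
    {wW : Fin q → S} (hcw : St.SB.coact w = ∑ j, wK j ⊗ₜ[k] wW j)
    (hwW : ∀ j, wW j ∈ St.SB.grade 1) (a : J) (x : R) :
    St.tauRS (St.RB.act a x) w = ∑ j, St.τ₀ a (wK j) * St.tauRS x (wW j) := by
  obtain ⟨p, a1, a2, ha⟩ := exists_fin_sum_tmul (St.DJ.comul a)
  have hpair := St.tau_Amul_tmul_one hw hcw ((1 : R) ⊗ₜ[k] a) (x ⊗ₜ[k] (1 : J))
  rw [St.τ_JW a w hw, zero_mul, zero_add, St.Amul_one_tmul_tmul_one a x ha, map_sum,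
    LinearMap.sum_apply] at hpair
  simp only [St.τ_ext, St.tau_tmul hw hcw hwW, ← tauRS_apply] at hpair
  rw [← hpair, ← St.DJ.sum_counit_smul_right a ha]
  simp only [map_sum, LinearMap.sum_apply, map_smul, LinearMap.smul_apply, smul_eq_mul]

theorem tauRS_eq_zero_of_mem_grade {m : ℕ} (hm : m ≠ 1) {x : R} (hx : x ∈ St.RB.grade m)
    {w : S} (hw : w ∈ St.SB.grade 1) : St.tauRS x w = 0 := by
  obtain ⟨q, wK, wW, -, hcw⟩ := St.SB.coact_grade w hw
  rcases m with _ | _ | m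
  · rw [St.RB.eq_counit_smul_one_of_mem_grade_zero hx, map_smul, LinearMap.smul_apply,
      tauRS_apply, St.tau_one_tmul_one hw, smul_zero]
  · exact absurd rfl hm
  · rw [St.RB.grade_eq_pow St.RB_pre, pow_succ'] at hx
    refine Submodule.mul_induction_on hx (fun v hv y hy => ?_) fun x y hx hy => by
      rw [map_add, LinearMap.add_apply, hx, hy, add_zero]
    rw [St.tauRS_mul_of_mem_grade_one hw hcw hv,
      St.RB.counit_eq_zero_of_mem_grade St.RB_pre (Nat.succ_ne_zero m)
        (St.RB.pow_grade_one_le _ hy), mul_zero]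

theorem tauRS_proj_one {w : S} (hw : w ∈ St.SB.grade 1) (x : R) :
    St.tauRS (St.RB.proj 1 x) w = St.tauRS x w := by
  suffices h : St.tauRS.flip w ∘ₗ St.RB.proj 1 = St.tauRS.flip w from LinearMap.congr_fun h x
  refine linearMap_ext_of_isInternal St.RB.internal fun m y hy => ?_
  rw [LinearMap.comp_apply, gradedProj_of_mem St.RB.internal 1 hy]
  split_ifs with hm
  · rfl
  · rw [map_zero, LinearMap.flip_apply, St.tauRS_eq_zero_of_mem_grade hm hy hw]

theorem sAct_apply (s : S) (r : R) {p : ℕ} {r1 r2 : Fin p → R}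
    (h : St.RB.comul r = ∑ i, r1 i ⊗ₜ[k] r2 i) :
    St.sAct s r = ∑ i, St.tauRS (r1 i) s • r2 i := by
  simp [Setup.sAct, h]

theorem sAct_one {w : S} (hw : w ∈ St.SB.grade 1) : St.sAct w 1 = 0 := by
  simp [Setup.sAct, St.RB.comul_one, tauRS_apply, St.tau_one_tmul_one hw]

theorem sAct_of_mem_grade_zero {w : S} (hw : w ∈ St.SB.grade 1) {x : R}
    (hx : x ∈ St.RB.grade 0) : St.sAct w x = 0 := by
  rw [St.RB.eq_counit_smul_one_of_mem_grade_zero hx, map_smul, St.sAct_one hw, smul_zero]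

theorem sAct_mem_grade {w : S} (hw : w ∈ St.SB.grade 1) {m : ℕ} {x : R}
    (hx : x ∈ St.RB.grade m) : St.sAct w x ∈ St.RB.grade (m - 1) := by
  obtain ⟨p, d, e, y, z, hg, hc⟩ := St.RB.comul_grade x hx
  rw [St.sAct_apply w x hc]
  refine Submodule.sum_mem _ fun i _ => ?_
  obtain ⟨hde, hy, hz⟩ := hg i
  by_cases hd : d i = 1
  · exact Submodule.smul_mem _ _ ((show e i = m - 1 by omega) ▸ hz)
  · rw [St.tauRS_eq_zero_of_mem_grade hd hy hw, zero_smul]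
    exact zero_mem _

theorem proj_comp_sAct {w : S} (hw : w ∈ St.SB.grade 1) (n : ℕ) :
    St.RB.proj n ∘ₗ St.sAct w = St.sAct w ∘ₗ St.RB.proj (n + 1) := by
  refine linearMap_ext_of_isInternal St.RB.internal fun m y hy => ?_
  rw [LinearMap.comp_apply, LinearMap.comp_apply, gradedProj_of_mem St.RB.internal _ hy]
  rcases m with _ | m
  · rw [St.sAct_of_mem_grade_zero hw hy, if_neg (by omega), map_zero, map_zero]
  · rw [gradedProj_of_mem St.RB.internal n (St.sAct_mem_grade hw hy), Nat.add_sub_cancel]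
    split_ifs with h h' h'
    · rfl
    · omega
    · omega
    · rw [map_zero]

/-- The left legs of `Δ_{1,n} x` lie in `V`, where `τ₁` is nondegenerate. -/
theorem comulBideg_one_eq_zero
    (hinj : ∀ v ∈ St.RB.grade 1, (∀ w ∈ St.SB.grade 1, St.tauRS v w = 0) → v = 0)
    (n : ℕ) {x : R} (h : ∀ w ∈ St.SB.grade 1, St.sAct w x = 0) :
    St.RB.comulBideg 1 n x = 0 := by
  have hker : ⨅ w : St.SB.grade 1, LinearMap.ker (St.tauRS.flip w)
      ≤ LinearMap.ker (St.RB.proj 1) := by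
    intro y hy
    simp only [Submodule.mem_iInf, LinearMap.mem_ker, LinearMap.flip_apply] at hy ⊢
    exact hinj _ (gradedProj_mem St.RB.internal 1 y) fun w hw => by
      rw [St.tauRS_proj_one hw, hy ⟨w, hw⟩]
  have hpair : ∀ w : St.SB.grade 1,
      (St.tauRS.flip w).rTensor R ((St.RB.proj n).lTensor R (St.RB.comul x)) = 0 := by
    intro w
    have hw : TensorProduct.lid k R ((St.tauRS.flip w).rTensor R (St.RB.comul x)) = 0 := h w w.2
    rw [← LinearMap.comp_apply, LinearMap.rTensor_comp_lTensor, ← LinearMap.lTensor_comp_rTensor,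
      LinearMap.comp_apply,
      (TensorProduct.lid k R).map_eq_zero_iff.mp hw, map_zero]
  have := rTensor_eq_zero_of_iInf_ker_le _ _ hker _ hpair
  rwa [← LinearMap.comp_apply, LinearMap.rTensor_comp_lTensor] at this

theorem iInf_ker_sAct
    (hinj : ∀ v ∈ St.RB.grade 1, (∀ w ∈ St.SB.grade 1, St.tauRS v w = 0) → v = 0)
    (hN : St.RB.IsNichols k) :
    (⨅ w ∈ St.SB.grade 1, LinearMap.ker (St.sAct w)) = Submodule.span k {(1 : R)} := by
  refine le_antisymm (fun r hr => ?_) ?_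
  · simp only [Submodule.mem_iInf, LinearMap.mem_ker] at hr
    have hpos : ∀ n, St.RB.proj (n + 1) r = 0 := fun n =>
      St.RB.eq_zero_of_comulBideg_one_eq_zero hN (gradedProj_mem St.RB.internal _ r)
        (St.comulBideg_one_eq_zero hinj n fun w hw => by
          rw [← LinearMap.comp_apply, ← St.proj_comp_sAct hw, LinearMap.comp_apply, hr w hw,
            map_zero])
    rw [← St.RB.grade0]
    refine mem_of_forall_ne_gradedProj_eq_zero St.RB.internal fun n hn => ?_
    obtain ⟨n, rfl⟩ := Nat.exists_eq_succ_of_ne_zero hn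
    exact hpos n
  · rw [Submodule.span_le, Set.singleton_subset_iff]
    simp only [SetLike.mem_coe, Submodule.mem_iInf, LinearMap.mem_ker]
    exact fun w hw => St.sAct_one hw

theorem sAct_mul_of_mem_grade_one {v : R} (hv : v ∈ St.RB.grade 1) {w : S}
    (hw : w ∈ St.SB.grade 1) {p q : ℕ} {vJ : Fin p → J} {vV : Fin p → R} {wK : Fin q → K}
    {wW : Fin q → S} (hcv : St.RB.coact v = ∑ i, vJ i ⊗ₜ[k] vV i)
    (hcw : St.SB.coact w = ∑ j, wK j ⊗ₜ[k] wW j) (hwW : ∀ j, wW j ∈ St.SB.grade 1) (y : R) :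
    St.sAct w (v * y)
      = ∑ i, ∑ j, St.τ₀ (vJ i) (wK j) • (vV i * St.sAct (wW j) y) + St.tauRS v w • y := by
  obtain ⟨u, y1, y2, hy⟩ := exists_fin_sum_tmul (St.RB.comul y)
  simp only [Setup.sAct, LinearMap.comp_apply, St.RB.comul_mul_of_mem_grade_one hv hcv hy, hy,
    map_add, map_sum, LinearMap.rTensor_tmul, LinearMap.flip_apply, LinearEquiv.coe_coe,
    TensorProduct.lid_tmul, St.tauRS_mul_of_mem_grade_one hw hcw hv,
    St.tauRS_act hw hcw hwW, Finset.mul_sum, mul_smul_comm, Finset.smul_sum, Finset.sum_smul,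
    mul_smul]
  rw [add_comm, ← Finset.smul_sum, St.RB.sum_counit_smul_left y hy]
  congr 1
  refine Finset.sum_congr rfl fun i _ => ?_
  exact Finset.sum_comm

section VermaModule

variable (Q : QBosonAlg St) {M : Type} [AddCommGroup M] [Module k M]
  (bact : (R ⊗[k] S) →ₗ[k] M →ₗ[k] M)

structure IsAction : Prop where
  act_one : ∀ m : M, bact ((1 : R) ⊗ₜ[k] (1 : S)) m = m
  act_mul : ∀ (x y : R ⊗[k] S) (m : M), bact (Q.Bmul x y) m = bact x (bact y m)

/-- The space `M₀` of vectors annihilated by `S(1)`. -/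
def vacuum : Submodule k M :=
  ⨅ w ∈ St.SB.grade 1, LinearMap.ker (bact ((1 : R) ⊗ₜ[k] w))

def kappa : R ⊗[k] St.vacuum bact →ₗ[k] M :=
  TensorProduct.lift (LinearMap.compl₂ (bact ∘ₗ ((TensorProduct.mk k R S).flip 1))
    (St.vacuum bact).subtype)

theorem kappa_tmul (r : R) (m : St.vacuum bact) :
    St.kappa bact (r ⊗ₜ[k] m) = bact (r ⊗ₜ[k] (1 : S)) m := rfl

theorem mem_vacuum {m : M} :
    m ∈ St.vacuum bact ↔ ∀ w ∈ St.SB.grade 1, bact ((1 : R) ⊗ₜ[k] w) m = 0 := by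
  simp [vacuum]

/-- The relation `w v = τ₀(v₍₋₁₎, w₍₋₁₎) v₍₀₎ w₍₀₎ + τ₁(v, w)` of `ℬ` matches the rule
`sAct_mul_of_mem_grade_one` for `w ▷ (v x)`. -/
theorem bact_one_tmul_bact_mul
    (hM : St.IsAction Q bact)
    {v : R} (hv : v ∈ St.RB.grade 1) {x : R}
    (hx : ∀ w ∈ St.SB.grade 1, ∀ m ∈ St.vacuum bact,
      bact ((1 : R) ⊗ₜ[k] w) (bact (x ⊗ₜ[k] (1 : S)) m) = bact (St.sAct w x ⊗ₜ[k] (1 : S)) m)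
    {w : S} (hw : w ∈ St.SB.grade 1) {m : M} (hm : m ∈ St.vacuum bact) :
    bact ((1 : R) ⊗ₜ[k] w) (bact ((v * x) ⊗ₜ[k] (1 : S)) m)
      = bact (St.sAct w (v * x) ⊗ₜ[k] (1 : S)) m := by
  obtain ⟨p, vJ, vV, -, hcv⟩ := St.RB.coact_grade v hv
  obtain ⟨q, wK, wW, hwW, hcw⟩ := St.SB.coact_grade w hw
  have hrr : ∀ (r r' : R) (m : M),
      bact ((r * r') ⊗ₜ[k] (1 : S)) m = bact (r ⊗ₜ[k] 1) (bact (r' ⊗ₜ[k] 1) m) := by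
    intro r r' m
    rw [← Q.mul_rr, hM.act_mul]
  have hrs : ∀ (r : R) (s : S) (m : M),
      bact (r ⊗ₜ[k] s) m = bact (r ⊗ₜ[k] 1) (bact ((1 : R) ⊗ₜ[k] s) m) := by
    intro r s m
    rw [← Q.mul_rs, hM.act_mul]
  rw [hrr, ← hM.act_mul, Q.mul_wv v w hv hw p q vJ vV wK wW hcv hcw,
    St.sAct_mul_of_mem_grade_one hv hw hcv hcw hwW x]
  simp only [map_add, map_sum, map_smul, LinearMap.add_apply, LinearMap.sum_apply,
    LinearMap.smul_apply, add_tmul, sum_tmul, ← smul_tmul', hM.act_one, tauRS_apply]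
  congr 1
  refine Finset.sum_congr rfl fun i _ => Finset.sum_congr rfl fun j _ => ?_
  rw [hrs (vV i) (wW j), hx _ (hwW j) m hm, ← hrr]

theorem bact_one_tmul_bact
    (hM : St.IsAction Q bact)
    (r : R) {w : S} (hw : w ∈ St.SB.grade 1) {m : M} (hm : m ∈ St.vacuum bact) :
    bact ((1 : R) ⊗ₜ[k] w) (bact (r ⊗ₜ[k] (1 : S)) m) = bact (St.sAct w r ⊗ₜ[k] (1 : S)) m := by
  let C : R → Prop := fun r => ∀ w ∈ St.SB.grade 1, ∀ m ∈ St.vacuum bact,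
    bact ((1 : R) ⊗ₜ[k] w) (bact (r ⊗ₜ[k] (1 : S)) m) = bact (St.sAct w r ⊗ₜ[k] (1 : S)) m
  have hadd : ∀ x y, C x → C y → C (x + y) := fun x y hx hy w hw m hm => by
    rw [add_tmul, map_add, LinearMap.add_apply, map_add, hx w hw m hm, hy w hw m hm, map_add,
      add_tmul, map_add, LinearMap.add_apply]
  suffices h : C r from h w hw m hm
  refine Submodule.iSup_induction _ (motive := C) (St.RB.mem_iSup_pow_grade_one St.RB_pre r)
    (fun n x hx => ?_) (fun w _ m _ => by simp) hadd
  refine Submodule.pow_induction_on_left _ (fun c w hw m hm => ?_) hadd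
    (fun v hv x hx w hw m hm => St.bact_one_tmul_bact_mul Q bact hM hv hx hw hm) hx
  rw [Algebra.algebraMap_eq_smul_one, map_smul, St.sAct_one hw, smul_zero, zero_tmul, map_zero,
    ← smul_tmul', map_smul, LinearMap.smul_apply, hM.act_one, map_smul,
    (St.mem_vacuum bact).mp hm w hw, smul_zero, LinearMap.zero_apply]

theorem kappa_rTensor_sAct
    (hM : St.IsAction Q bact)
    {w : S} (hw : w ∈ St.SB.grade 1) (ξ : R ⊗[k] St.vacuum bact) :
    St.kappa bact ((St.sAct w).rTensor _ ξ) = bact ((1 : R) ⊗ₜ[k] w) (St.kappa bact ξ) := by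
  suffices h : St.kappa bact ∘ₗ (St.sAct w).rTensor _ = bact ((1 : R) ⊗ₜ[k] w) ∘ₗ St.kappa bact
    from LinearMap.congr_fun h ξ
  refine TensorProduct.ext' fun r m => ?_
  rw [LinearMap.comp_apply, LinearMap.comp_apply, LinearMap.rTensor_tmul, kappa_tmul, kappa_tmul,
    St.bact_one_tmul_bact Q bact hM r hw m.2]

/-- If every left leg of `ξ` is a scalar, i.e. `ξ = (η ∘ ε ⊗ id) ξ`, then `κ_M ξ = (ε ⊗ id) ξ`,
so `κ_M ξ = 0` forces `ξ = 0`. -/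
theorem eq_zero_of_kappa_eq_zero_of_scalar (hone : ∀ m : M, bact ((1 : R) ⊗ₜ[k] (1 : S)) m = m)
    {ξ : R ⊗[k] St.vacuum bact}
    (hξ : (LinearMap.id - Algebra.linearMap k R ∘ₗ St.RB.counit).rTensor _ ξ = 0)
    (hκ : St.kappa bact ξ = 0) : ξ = 0 := by
  have hscalar : ξ = (Algebra.linearMap k R).rTensor _ (St.RB.counit.rTensor _ ξ) := by
    rwa [LinearMap.rTensor_sub, LinearMap.rTensor_id, LinearMap.sub_apply, LinearMap.id_apply,
      LinearMap.rTensor_comp, LinearMap.comp_apply, sub_eq_zero] at hξ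
  have hκε : St.kappa bact ∘ₗ (Algebra.linearMap k R).rTensor _
      = (St.vacuum bact).subtype ∘ₗ (TensorProduct.lid k _).toLinearMap := by
    refine TensorProduct.ext' fun c m => ?_
    simp [kappa_tmul, Algebra.algebraMap_eq_smul_one, ← smul_tmul', hone]
  have hε : St.RB.counit.rTensor _ ξ = 0 := by
    have h := LinearMap.congr_fun hκε (St.RB.counit.rTensor _ ξ)
    rw [LinearMap.comp_apply, ← hscalar, hκ, LinearMap.comp_apply, eq_comm,
      Submodule.subtype_apply, ZeroMemClass.coe_eq_zero, LinearEquiv.coe_coe,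
      LinearEquiv.map_eq_zero_iff] at h
    exact h
  rw [hscalar, hε, map_zero]

/-- Applying `w ∈ W` lowers the top degree of the left legs of `ξ`, and `κ_M` intertwines
`w ▷ -` with the action of `w`. -/
theorem eq_zero_of_kappa_eq_zero_of_degree_le
    (hinj : ∀ v ∈ St.RB.grade 1, (∀ w ∈ St.SB.grade 1, St.tauRS v w = 0) → v = 0)
    (hN : St.RB.IsNichols k) (hM : St.IsAction Q bact) (N : ℕ) {ξ : R ⊗[k] St.vacuum bact}
    (hdeg : ∀ n, N < n → (St.RB.proj n).rTensor _ ξ = 0) (hκ : St.kappa bact ξ = 0) :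
    ξ = 0 := by
  induction N generalizing ξ with
  | zero =>
    refine St.eq_zero_of_kappa_eq_zero_of_scalar bact hM.act_one (rTensor_eq_zero_of_iInf_ker_le
      (fun n : {n : ℕ // n ≠ 0} => St.RB.proj n) _ (fun x hx => ?_) ξ
      fun n => hdeg n (Nat.pos_of_ne_zero n.2)) hκ
    simp only [Submodule.mem_iInf, LinearMap.mem_ker] at hx
    exact St.RB.mem_ker_id_sub_counit
      (mem_of_forall_ne_gradedProj_eq_zero St.RB.internal fun n hn => hx ⟨n, hn⟩)
  | succ N ih =>
    have hsAct : ∀ w : St.SB.grade 1, (St.sAct w).rTensor _ ξ = 0 := by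
      intro w
      refine ih (fun n hn => ?_) (by rw [St.kappa_rTensor_sAct Q bact hM w.2, hκ, map_zero])
      rw [← LinearMap.comp_apply, ← LinearMap.rTensor_comp, St.proj_comp_sAct w.2,
        LinearMap.rTensor_comp, LinearMap.comp_apply, hdeg (n + 1) (by omega), map_zero]
    refine St.eq_zero_of_kappa_eq_zero_of_scalar bact hM.act_one
      (rTensor_eq_zero_of_iInf_ker_le _ _ (fun x hx => ?_) ξ hsAct) hκ
    refine St.RB.mem_ker_id_sub_counit ?_
    rw [St.RB.grade0, ← St.iInf_ker_sAct hinj hN]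
    simp only [Submodule.mem_iInf, LinearMap.mem_ker] at hx ⊢
    exact fun w hw => hx ⟨w, hw⟩

theorem kappa_injective
    (hinj : ∀ v ∈ St.RB.grade 1, (∀ w ∈ St.SB.grade 1, St.tauRS v w = 0) → v = 0)
    (hN : St.RB.IsNichols k) (hM : St.IsAction Q bact) :
    Function.Injective (St.kappa bact) := by
  rw [← LinearMap.ker_eq_bot, LinearMap.ker_eq_bot']
  intro ξ hκ
  obtain ⟨N, hdeg⟩ := exists_rTensor_gradedProj_eq_zero_of_lt St.RB.internal ξ
  exact St.eq_zero_of_kappa_eq_zero_of_degree_le Q bact hinj hN hM N hdeg hκ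

end VermaModule

end Setup

end QB

namespace QB

variable {k : Type} [Field k]
variable {J : Type} [Ring J] [Algebra k J] {R : Type} [Ring R] [Algebra k R]
variable {K S : Type} [Ring K] [Algebra k K] [Ring S] [Algebra k S]

theorem statement15 (St : Setup k J K R S)
    (Q : QBosonAlg St)
    -- τ₁^l : V → W* is injective
    (hinj : ∀ v ∈ St.RB.grade 1, (∀ w ∈ St.SB.grade 1, St.tauRS v w = 0) → v = 0)
    -- R is the Nichols algebra of V
    (hN : St.RB.IsNichols k) :
    -- (1)  R₀ = k : the subspace of the Verma module R annihilated by S(1) is k·1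
    ((⨅ w ∈ St.SB.grade 1, LinearMap.ker (St.sAct w)) = Submodule.span k {(1 : R)}) ∧
    -- (2)  for every left ℬ-module M, the ℬ-linear map κ_M : R ⊗ M₀ → M, r ⊗ m ↦ rm,
    --      is injective
    (∀ (M : Type) (_ : AddCommGroup M) (_ : Module k M)
       (bact : (R ⊗[k] S) →ₗ[k] M →ₗ[k] M),
      (∀ m : M, bact ((1 : R) ⊗ₜ[k] (1 : S)) m = m) →
      (∀ (x y : R ⊗[k] S) (m : M), bact (Q.Bmul x y) m = bact x (bact y m)) →
      Function.Injective
        ⇑(TensorProduct.lift (LinearMap.compl₂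
          (bact ∘ₗ ((TensorProduct.mk k R S).flip 1))
          (⨅ w ∈ St.SB.grade 1,
            LinearMap.ker (bact ((1 : R) ⊗ₜ[k] w))).subtype))) := by
  exact ⟨St.iInf_ker_sAct hinj hN, fun M _ _ bact hone hmul =>
    St.kappa_injective Q bact hinj hN ⟨hone, hmul⟩⟩

end QB
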